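/- ZMod 12 has no 8-element subset that is a sum A + B where A is a 4-element extreme subset of ZMod 12 and B is a 2-element coset. (Up to equivalence, the only 4-element extreme subsets of ZMod 12 are {0,1,6,7}, {0,2,6,8}, and {0,3,6,9}, all of which contain 6; if B is normalized to {0,6}, then A cannot contain 6, a contradiction with the fact that every 4-element extreme set containing 0 contains 6 after a suitable normalization.) -/

import Mathlib

/-! A subgroup of order 2 of `ZMod 12` is `{0, 6}`, so `B = {b, b + 6}`, and `|A + B| = |A| |B|`
says that `A` is disjoint from `6 + A`. Every 4-element subset of `ZMod 12` disjoint from its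
translate by 6 has a nonzero difference `e` realised exactly once (a finite check, after translating
`A` to contain 0). The autocorrelation at `e` of a unimodular `f` supported on `A` is then a single
term of norm 1, so it cannot vanish. -/

open Complex Finset Pointwise

/-- A finite subset `A` of `ZMod n` is extreme if there is a function supported
on `A`, unimodular on `A`, with vanishing autocorrelation at nonzero shifts. -/
def IsExtremeSet {n : ℕ} [NeZero n] (A : Finset (ZMod n)) : Prop :=
  ∃ f : ZMod n → ℂ,
    (∀ x ∈ A, ‖f x‖ = 1) ∧ (∀ x ∉ A, f x = 0) ∧
    ∀ d : ZMod n, d ≠ 0 → ∑ x : ZMod n, f x * (starRingEnd ℂ) (f (x - d)) = 0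

lemma Finset.mem_vadd_finset_iff_sub_mem {G : Type*} [AddCommGroup G] [DecidableEq G]
    {A : Finset G} {d x : G} : x ∈ d +ᵥ A ↔ x - d ∈ A := by
  rw [← neg_vadd_mem_iff, vadd_eq_add, neg_add_eq_sub]

lemma Finset.card_vadd_inter_vadd_vadd {G : Type*} [AddCommGroup G] [DecidableEq G]
    (A : Finset G) (t e : G) : #((t +ᵥ A) ∩ (e +ᵥ (t +ᵥ A))) = #(A ∩ (e +ᵥ A)) := by
  rw [vadd_comm e t, ← vadd_finset_inter, card_vadd_finset]

lemma Finset.inter_vadd_sub_eq_empty_of_card_add_eq_mul {G : Type*} [AddCommGroup G]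
    [DecidableEq G] {A B : Finset G} (h : #(A + B) = #A * #B) {b c : G} (hb : b ∈ B)
    (hc : c ∈ B) (hbc : b ≠ c) : A ∩ ((c - b) +ᵥ A) = ∅ := by
  refine eq_empty_of_forall_notMem fun x hx => hbc ?_
  rw [mem_inter, mem_vadd_finset_iff_sub_mem] at hx
  have hsum : x + b = (x - (c - b)) + c := by abel
  exact congrArg Prod.snd <|
    card_add_iff.mp h (Set.mk_mem_prod hx.1 hb) (Set.mk_mem_prod hx.2 hc) hsum

lemma AddSubgroup.natCard_eq_ncard_of_eq_image_add {G : Type*} [AddGroup G]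
    {K : AddSubgroup G} {B : Set G} {t : G} (hB : B = (fun k => t + k) '' K) :
    Nat.card K = B.ncard := by
  rw [hB, Set.ncard_image_of_injective _ (add_right_injective t), ← Nat.card_coe_set_eq]
  rfl

lemma AddSubgroup.neg_add_mem_of_eq_image_add {G : Type*} [AddGroup G]
    {K : AddSubgroup G} {B : Set G} {t : G} (hB : B = (fun k => t + k) '' K) {b c : G}
    (hb : b ∈ B) (hc : c ∈ B) : -b + c ∈ K := by
  rw [hB] at hb hc
  obtain ⟨k, hk, rfl⟩ := hb
  obtain ⟨l, hl, rfl⟩ := hc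
  simpa [neg_add_rev, add_assoc] using K.add_mem (K.neg_mem hk) hl

lemma ZMod.eq_six_of_mem_of_natCard_eq_two {K : AddSubgroup (ZMod 12)} (hK : Nat.card K = 2)
    {x : ZMod 12} (hx : x ∈ K) (hx0 : x ≠ 0) : x = 6 := by
  have h2 : 2 • x = 0 := hK ▸ addOrderOf_dvd_iff_nsmul_eq_zero.mp (K.addOrderOf_dvd_natCard hx)
  exact (by decide : ∀ y : ZMod 12, 2 • y = 0 → y ≠ 0 → y = 6) x h2 hx0

lemma IsExtremeSet.card_inter_vadd_ne_one {n : ℕ} [NeZero n] {A : Finset (ZMod n)}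
    (hA : IsExtremeSet A) {d : ZMod n} (hd : d ≠ 0) : #(A ∩ (d +ᵥ A)) ≠ 1 := by
  obtain ⟨f, hf1, hf0, hcorr⟩ := hA
  intro h1
  obtain ⟨a, ha⟩ := card_eq_one.mp h1
  have haA : a ∈ A ∧ a - d ∈ A := by
    rw [← mem_vadd_finset_iff_sub_mem, ← mem_inter, ha]
    exact mem_singleton_self a
  have hsum : ∑ x, f x * (starRingEnd ℂ) (f (x - d)) = f a * (starRingEnd ℂ) (f (a - d)) := by
    refine Fintype.sum_eq_single a fun x hx => ?_
    have hx' : x ∉ A ∩ (d +ᵥ A) := by simpa [ha] using hx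
    rw [mem_inter, mem_vadd_finset_iff_sub_mem, not_and_or] at hx'
    rcases hx' with hx' | hx'
    · rw [hf0 x hx', zero_mul]
    · rw [hf0 _ hx', map_zero, mul_zero]
  have hnorm := congrArg norm (hcorr d hd)
  rw [hsum, norm_mul, norm_conj, hf1 a haA.1, hf1 _ haA.2] at hnorm
  norm_num at hnorm

set_option maxRecDepth 40000 in
lemma exists_card_inter_vadd_eq_one_of_insert_zero : ∀ b c d : ZMod 12,
    #({0, b, c, d} : Finset (ZMod 12)) = 4 →
    {0, b, c, d} ∩ ((6 : ZMod 12) +ᵥ ({0, b, c, d} : Finset (ZMod 12))) = ∅ →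
    ∃ e : ZMod 12, e ≠ 0 ∧ #({0, b, c, d} ∩ (e +ᵥ ({0, b, c, d} : Finset (ZMod 12)))) = 1 := by
  decide

lemma exists_card_inter_vadd_eq_one {A : Finset (ZMod 12)} (hA : #A = 4)
    (h6 : A ∩ ((6 : ZMod 12) +ᵥ A) = ∅) : ∃ e : ZMod 12, e ≠ 0 ∧ #(A ∩ (e +ᵥ A)) = 1 := by
  obtain ⟨a, ha⟩ := card_pos.mp (hA ▸ by norm_num : 0 < #A)
  have h0 : 0 ∈ -a +ᵥ A := by simpa [mem_vadd_finset_iff_sub_mem] using ha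
  obtain ⟨b, c, d, -, -, -, hbcd⟩ :=
    card_eq_three.mp (by rw [card_erase_of_mem h0, card_vadd_finset, hA] : #((-a +ᵥ A).erase 0) = 3)
  have hA' : -a +ᵥ A = {0, b, c, d} := by rw [← insert_erase h0, hbcd]
  have h6' := card_vadd_inter_vadd_vadd A (-a) 6
  rw [h6, card_empty, hA', card_eq_zero] at h6'
  obtain ⟨e, he, he1⟩ := exists_card_inter_vadd_eq_one_of_insert_zero b c d
    (by rw [← hA', card_vadd_finset, hA]) h6'
  exact ⟨e, he, by rwa [← hA', card_vadd_inter_vadd_vadd] at he1⟩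

theorem no_eight_element_sum_extreme_in_zmod12 :
    ¬ ∃ (S A B : Finset (ZMod 12)), S.card = 8 ∧
        A.card = 4 ∧ IsExtremeSet A ∧ B.card = 2 ∧
        (∃ (t : ZMod 12) (K : AddSubgroup (ZMod 12)),
          (B : Set (ZMod 12)) = (fun k => t + k) '' (K : Set (ZMod 12))) ∧
        S = A + B := by
  rintro ⟨S, A, B, hS, hA4, hA, hB2, ⟨t, K, hBK⟩, rfl⟩
  obtain ⟨b, c, hbc, rfl⟩ := card_eq_two.mp hB2
  have hK : Nat.card K = 2 := by
    rw [K.natCard_eq_ncard_of_eq_image_add hBK, Set.ncard_coe_finset, hB2]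
  have h6 : c - b = 6 := by
    refine ZMod.eq_six_of_mem_of_natCard_eq_two hK ?_ (sub_ne_zero.mpr hbc.symm)
    simpa [neg_add_eq_sub] using K.neg_add_mem_of_eq_image_add hBK (by simp) (by simp)
  have hdisj : A ∩ ((6 : ZMod 12) +ᵥ A) = ∅ :=
    h6 ▸ inter_vadd_sub_eq_empty_of_card_add_eq_mul (by rw [hS, hA4, hB2]) (by simp) (by simp) hbc
  obtain ⟨e, he, he1⟩ := exists_card_inter_vadd_eq_one hA4 hdisj
  exact hA.card_inter_vadd_ne_one he he1
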